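/- arXiv:math/0610580 — 3 statements merged into one kernel-verified Lean document; each statement's English description precedes it below -/
import Mathlib

section
/- (Theorem 4) Let N ≥ 2, let A = (a_{ij}) be an irreducible N×N matrix satisfying Condition A2, suppose f : ℝ^n × ℝ⁺ → ℝ^n is continuous and belongs to QUAD(Δ,ϖ) with ϖ > 0, and let g_1,…,g_n : ℝ → ℝ satisfy (g_k(u) − g_k(v))/(u − v) ≥ β for all u ≠ v and k = 1,…,n, where β > 0. Write g(x) = (g_1(x^1),…,g_n(x^n))^T for x = (x^1,…,x^n)^T ∈ ℝ^n. Let α > 0 and let x_1,…,x_N : [0,∞) → ℝ^n and c : [0,∞) → ℝ be differentiable functions satisfying, for all t ≥ 0, ẋ_i(t) = f(x_i(t),t) + c(t) Σ_{j≠i} a_{ij} (g(x_j(t)) − g(x_i(t))), ċ(t) = −(α/2) Σ_{i,j} a_{ij} x_i(t)^T g(x_j(t)), and c(0) = 0. Then ‖x_i(t) − x_j(t)‖ → 0 as t → ∞ for all i, j, and c(t) converges to a finite limit. -/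
/-!
Lyapunov argument. Let `Q = Σᵢⱼ ‖xᵢ - xⱼ‖²`, `T = Σᵢⱼ aᵢⱼ xᵢᵀ g(xⱼ)` and `R = Σᵢⱼ aᵢⱼ ‖xᵢ - xⱼ‖²`.
Since `A` is symmetric with zero row sums, the coupling contributes `4 N c T` to `Q'`, while
`T = -½ Σᵢⱼ aᵢⱼ (xᵢ - xⱼ)ᵀ (g(xᵢ) - g(xⱼ)) ≤ -(β/2) R`, and irreducibility gives `Q ≤ C R`.
For `V = Q + (4N/α) (c - c*)²` the `c`-dependent terms of `V'` cancel, and with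
`c* = C M / (N β)`, where `M` bounds the entries of `Δ`, one gets `V' ≤ -2ϖ Q`.
So `V` decreases, `c` is nondecreasing and bounded, hence convergent, `Q` converges too, and a
positive limit of `Q` would drive `V` below zero.
-/

open Matrix Filter Topology Finset

section Laplacian

variable {ι m R : Type*} [Fintype ι] [Fintype m] [CommRing R]

theorem sum_sum_sub_dotProduct_sub (X Y : ι → m → R) :
    ∑ i, ∑ j, (X i - X j) ⬝ᵥ (Y i - Y j) =
      2 * Fintype.card ι * ∑ i, X i ⬝ᵥ Y i - 2 * ((∑ i, X i) ⬝ᵥ ∑ j, Y j) := by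
  simp only [sub_dotProduct, dotProduct_sub, sum_sub_distrib, sum_dotProduct, dotProduct_sum,
    sum_const, card_univ, nsmul_eq_mul, ← mul_sum]
  rw [sum_comm (f := fun i j => X j ⬝ᵥ Y i)]
  ring

variable {A : Matrix ι ι R} (hsym : ∀ i j, A i j = A j i) (hrow : ∀ i, ∑ j, A i j = 0)
include hrow

theorem sum_erase_smul_sub_eq_sum_smul [DecidableEq ι] {M : Type*} [AddCommGroup M] [Module R M]
    (G : ι → M) (i : ι) :
    ∑ j ∈ univ.erase i, A i j • (G j - G i) = ∑ j, A i j • G j := by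
  rw [sum_erase _ (by simp)]
  simp only [smul_sub, sum_sub_distrib, ← sum_smul, hrow, zero_smul, sub_zero]

include hsym

theorem sum_sum_smul_eq_zero {M : Type*} [AddCommGroup M] [Module R M] (G : ι → M) :
    ∑ i, ∑ j, A i j • G j = 0 := by
  rw [sum_comm]
  refine sum_eq_zero fun j _ => ?_
  rw [← sum_smul, sum_congr rfl fun i _ => hsym i j, hrow, zero_smul]

theorem sum_sum_sub_dotProduct_sub_add_smul (X F G : ι → m → R) (c : R) :
    ∑ i, ∑ j, (X i - X j) ⬝ᵥ ((F i + c • ∑ l, A i l • G l) - (F j + c • ∑ l, A j l • G l)) =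
      ∑ i, ∑ j, (X i - X j) ⬝ᵥ (F i - F j) +
        2 * Fintype.card ι * c * ∑ i, ∑ j, A i j * (X i ⬝ᵥ G j) := by
  have hsplit : ∀ i j, (F i + c • ∑ l, A i l • G l) - (F j + c • ∑ l, A j l • G l) =
      (F i - F j) + c • ((∑ l, A i l • G l) - ∑ l, A j l • G l) := fun i j => by module
  simp only [hsplit, dotProduct_add, dotProduct_smul, smul_eq_mul, sum_add_distrib, ← mul_sum]
  rw [sum_sum_sub_dotProduct_sub X fun i => ∑ l, A i l • G l, sum_sum_smul_eq_zero hsym hrow,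
    dotProduct_zero]
  simp only [dotProduct_sum, dotProduct_smul, smul_eq_mul]
  ring

theorem sum_sum_mul_sub_dotProduct_sub (X G : ι → m → R) :
    ∑ i, ∑ j, A i j * ((X i - X j) ⬝ᵥ (G i - G j)) = -2 * ∑ i, ∑ j, A i j * (X i ⬝ᵥ G j) := by
  have hcol : ∀ j, ∑ i, A i j = 0 := fun j => by simp only [hsym _ j, hrow]
  simp only [sub_dotProduct, dotProduct_sub, mul_sub, sum_sub_distrib, ← sum_mul, hrow, zero_mul,
    sum_const_zero]
  rw [sum_comm (f := fun i j => A i j * (X j ⬝ᵥ G j))]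
  simp only [← sum_mul, hcol, zero_mul, sum_const_zero]
  rw [sum_comm (f := fun i j => A i j * (X j ⬝ᵥ G i))]
  simp only [hsym]
  ring

end Laplacian

theorem Relation.reflTransGen_of_forall_exists_rel {ι : Type*} [Fintype ι] {r : ι → ι → Prop}
    (h : ∀ S : Finset ι, S.Nonempty → S ≠ univ → ∃ i ∈ S, ∃ j ∉ S, r i j) (i j : ι) :
    ReflTransGen r i j := by
  classical
  let S := univ.filter (ReflTransGen r i)
  by_contra hij
  have hS : S ≠ univ := fun h => hij (mem_filter.mp (h ▸ mem_univ j : j ∈ S)).2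
  obtain ⟨p, hp, q, hq, hpq⟩ := h S ⟨i, mem_filter.mpr ⟨mem_univ i, .refl⟩⟩ hS
  simp only [S, mem_filter, mem_univ, true_and] at hp hq
  exact hq (hp.tail hpq)

section Poincare

variable {ι : Type*} {A : Matrix ι ι ℝ} (hoff : ∀ i j, i ≠ j → 0 ≤ A i j)
include hoff

theorem mul_sq_sub_nonneg_of_offDiag_nonneg (u : ι → ℝ) (i j : ι) :
    0 ≤ A i j * (u i - u j) ^ 2 := by
  rcases eq_or_ne i j with rfl | h
  · simp
  · exact mul_nonneg (hoff i j h) (sq_nonneg _)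

variable [Fintype ι]

theorem mul_sq_sub_le_sum_sum (u : ι → ℝ) (p q : ι) :
    A p q * (u p - u q) ^ 2 ≤ ∑ i, ∑ j, A i j * (u i - u j) ^ 2 :=
  calc A p q * (u p - u q) ^ 2 ≤ ∑ j, A p j * (u p - u j) ^ 2 :=
        single_le_sum (fun j _ => mul_sq_sub_nonneg_of_offDiag_nonneg hoff u p j) (mem_univ q)
    _ ≤ _ := single_le_sum (f := fun i => ∑ j, A i j * (u i - u j) ^ 2)
        (fun i _ => sum_nonneg fun j _ => mul_sq_sub_nonneg_of_offDiag_nonneg hoff u i j)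
        (mem_univ p)

theorem exists_sq_sub_le_mul_sum_sum {i j : ι}
    (h : Relation.ReflTransGen (fun p q => 0 < A p q) i j) :
    ∃ C, 0 ≤ C ∧ ∀ u : ι → ℝ, (u i - u j) ^ 2 ≤ C * ∑ i, ∑ j, A i j * (u i - u j) ^ 2 := by
  induction h with
  | refl => exact ⟨0, le_rfl, fun u => by simp⟩
  | @tail p q _ hpq ih =>
    obtain ⟨C, hC, hCu⟩ := ih
    refine ⟨2 * C + 2 / A p q, by positivity, fun u => ?_⟩
    set R := ∑ i, ∑ j, A i j * (u i - u j) ^ 2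
    have hedge : (u p - u q) ^ 2 ≤ R / A p q := by
      rw [le_div_iff₀ hpq, mul_comm]
      exact mul_sq_sub_le_sum_sum hoff u p q
    calc (u i - u q) ^ 2 ≤ 2 * (u i - u p) ^ 2 + 2 * (u p - u q) ^ 2 := by
          nlinarith [sq_nonneg (u i - u p - (u p - u q))]
      _ ≤ 2 * (C * R) + 2 * (R / A p q) := by gcongr; exact hCu u
      _ = (2 * C + 2 / A p q) * R := by ring

variable (hirr : ∀ S : Finset ι, S.Nonempty → S ≠ univ → ∃ i ∈ S, ∃ j, j ∉ S ∧ A i j ≠ 0)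
include hirr

theorem exists_sum_sum_sq_sub_le_mul :
    ∃ C > 0, ∀ u : ι → ℝ,
      ∑ i, ∑ j, (u i - u j) ^ 2 ≤ C * ∑ i, ∑ j, A i j * (u i - u j) ^ 2 := by
  have hconn := Relation.reflTransGen_of_forall_exists_rel (r := fun p q => 0 < A p q)
    fun S hS hSu => by
      obtain ⟨i, hi, j, hj, hA⟩ := hirr S hS hSu
      exact ⟨i, hi, j, hj, (hoff i j (by rintro rfl; exact hj hi)).lt_of_ne' hA⟩
  choose C hC hCu using fun i j => exists_sq_sub_le_mul_sum_sum hoff (hconn i j)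
  have hCsum : 0 ≤ ∑ i, ∑ j, C i j := sum_nonneg fun i _ => sum_nonneg fun j _ => hC i j
  refine ⟨1 + ∑ i, ∑ j, C i j, by positivity, fun u => ?_⟩
  have hR : 0 ≤ ∑ i, ∑ j, A i j * (u i - u j) ^ 2 :=
    sum_nonneg fun i _ => sum_nonneg fun j _ => mul_sq_sub_nonneg_of_offDiag_nonneg hoff u i j
  calc ∑ i, ∑ j, (u i - u j) ^ 2 ≤ ∑ i, ∑ j, C i j * ∑ i, ∑ j, A i j * (u i - u j) ^ 2 :=
        sum_le_sum fun i _ => sum_le_sum fun j _ => hCu i j u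
    _ = (∑ i, ∑ j, C i j) * ∑ i, ∑ j, A i j * (u i - u j) ^ 2 := by simp only [sum_mul]
    _ ≤ _ := by gcongr; linarith

theorem exists_sum_sum_dotProduct_sub_le_mul (m : Type*) [Fintype m] :
    ∃ C > 0, ∀ X : ι → m → ℝ, ∑ i, ∑ j, (X i - X j) ⬝ᵥ (X i - X j) ≤
      C * ∑ i, ∑ j, A i j * ((X i - X j) ⬝ᵥ (X i - X j)) := by
  obtain ⟨C, hC, hCu⟩ := exists_sum_sum_sq_sub_le_mul hoff hirr
  refine ⟨C, hC, fun X => ?_⟩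
  calc ∑ i, ∑ j, (X i - X j) ⬝ᵥ (X i - X j) = ∑ k, ∑ i, ∑ j, (X i k - X j k) ^ 2 := by
        simp only [dotProduct, Pi.sub_apply, ← sq, sum_comm (γ := m)]
    _ ≤ ∑ k, C * ∑ i, ∑ j, A i j * (X i k - X j k) ^ 2 := sum_le_sum fun k _ => hCu _
    _ = _ := by simp only [dotProduct, Pi.sub_apply, ← sq, mul_sum, sum_comm (γ := m)]

end Poincare

section Estimates

variable {m : Type*} [Fintype m]

theorem mul_sq_sub_le_of_le_slope {β : ℝ} {g : ℝ → ℝ}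
    (hg : ∀ u v, u ≠ v → β ≤ (g u - g v) / (u - v)) (u v : ℝ) :
    β * (u - v) ^ 2 ≤ (u - v) * (g u - g v) := by
  rcases eq_or_ne u v with rfl | h
  · simp
  · have hne : u - v ≠ 0 := sub_ne_zero.2 h
    calc β * (u - v) ^ 2 ≤ (g u - g v) / (u - v) * (u - v) ^ 2 := by
          gcongr; exact hg u v h
      _ = (u - v) * (g u - g v) := by field_simp

theorem mul_dotProduct_sub_le_of_le_slope {β : ℝ} {g : m → ℝ → ℝ}
    (hg : ∀ k u v, u ≠ v → β ≤ (g k u - g k v) / (u - v)) (x y : m → ℝ) :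
    β * ((x - y) ⬝ᵥ (x - y)) ≤ (x - y) ⬝ᵥ ((fun k => g k (x k)) - fun k => g k (y k)) := by
  simp only [dotProduct, mul_sum, Pi.sub_apply, ← sq]
  exact sum_le_sum fun k _ => mul_sq_sub_le_of_le_slope (hg k) (x k) (y k)

theorem sub_dotProduct_sub_le_of_quad {δ : m → ℝ} {ϖ M : ℝ} {x y u v : m → ℝ}
    (h : ∑ k, (x k - y k) * (u k - v k) - ∑ k, δ k * (x k - y k) ^ 2 ≤
      -ϖ * ∑ k, (x k - y k) ^ 2)
    (hδ : ∀ k, δ k ≤ M) : (x - y) ⬝ᵥ (u - v) ≤ (M - ϖ) * ((x - y) ⬝ᵥ (x - y)) := by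
  have hM : ∑ k, δ k * (x k - y k) ^ 2 ≤ M * ∑ k, (x k - y k) ^ 2 := by
    rw [mul_sum]
    exact sum_le_sum fun k _ => by gcongr; exact hδ k
  simp only [dotProduct, Pi.sub_apply, ← sq] at h ⊢
  linarith

variable {ι : Type*} [Fintype ι] {A : Matrix ι ι ℝ}

theorem sum_sum_mul_dotProduct_le (hsym : ∀ i j, A i j = A j i) (hrow : ∀ i, ∑ j, A i j = 0)
    (hoff : ∀ i j, i ≠ j → 0 ≤ A i j) {β : ℝ} {g : m → ℝ → ℝ}
    (hg : ∀ k u v, u ≠ v → β ≤ (g k u - g k v) / (u - v)) (X : ι → m → ℝ) :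
    ∑ i, ∑ j, A i j * (X i ⬝ᵥ fun k => g k (X j k)) ≤
      -(β / 2) * ∑ i, ∑ j, A i j * ((X i - X j) ⬝ᵥ (X i - X j)) := by
  have hterm : ∀ i j, β * (A i j * ((X i - X j) ⬝ᵥ (X i - X j))) ≤
      A i j * ((X i - X j) ⬝ᵥ ((fun k => g k (X i k)) - fun k => g k (X j k))) := fun i j => by
    rcases eq_or_ne i j with rfl | h
    · simp
    · rw [mul_left_comm]
      exact mul_le_mul_of_nonneg_left (mul_dotProduct_sub_le_of_le_slope hg _ _) (hoff i j h)
  have hsum := sum_le_sum fun i (_ : i ∈ univ) => sum_le_sum fun j (_ : j ∈ univ) => hterm i j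
  rw [sum_sum_mul_sub_dotProduct_sub hsym hrow X fun j k => g k (X j k)] at hsum
  simp only [← mul_sum] at hsum
  linarith

end Estimates

theorem HasDerivAt.dotProduct {𝕜 m : Type*} [NontriviallyNormedField 𝕜] [Fintype m]
    {u v : 𝕜 → m → 𝕜} {u' v' : m → 𝕜} {t : 𝕜} (hu : HasDerivAt u u' t) (hv : HasDerivAt v v' t) :
    HasDerivAt (fun s => u s ⬝ᵥ v s) (u' ⬝ᵥ v t + u t ⬝ᵥ v') t := by
  have h := HasDerivAt.fun_sum (u := univ) fun k _ =>
    (hasDerivAt_pi.1 hu k).fun_mul (hasDerivAt_pi.1 hv k)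
  rw [sum_add_distrib] at h
  exact h

theorem norm_le_sqrt_dotProduct_self {m : Type*} [Fintype m] (v : m → ℝ) : ‖v‖ ≤ √(v ⬝ᵥ v) := by
  refine (pi_norm_le_iff_of_nonneg (Real.sqrt_nonneg _)).2 fun k => ?_
  rw [Real.norm_eq_abs, ← Real.sqrt_sq_eq_abs, sq]
  exact Real.sqrt_le_sqrt (single_le_sum (f := fun k => v k * v k)
    (fun k _ => mul_self_nonneg _) (mem_univ k))

theorem hasDerivAt_sum_sum_dotProduct_sub {ι m : Type*} [Fintype ι] [Fintype m]
    {x : ι → ℝ → m → ℝ} {v : ι → m → ℝ} {t : ℝ} (h : ∀ i, HasDerivAt (x i) (v i) t) :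
    HasDerivAt (fun s => ∑ i, ∑ j, (x i s - x j s) ⬝ᵥ (x i s - x j s))
      (2 * ∑ i, ∑ j, (x i t - x j t) ⬝ᵥ (v i - v j)) t := by
  have h' := HasDerivAt.fun_sum (u := univ) fun i _ => HasDerivAt.fun_sum (u := univ) fun j _ =>
    ((h i).fun_sub (h j)).dotProduct ((h i).fun_sub (h j))
  refine h'.congr_deriv ?_
  simp only [mul_sum]
  refine sum_congr rfl fun i _ => sum_congr rfl fun j _ => ?_
  rw [dotProduct_comm]
  ring

theorem norm_sub_le_sqrt_sum_sum_dotProduct {ι m : Type*} [Fintype ι] [Fintype m]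
    (X : ι → m → ℝ) (i j : ι) : ‖X i - X j‖ ≤ √(∑ i, ∑ j, (X i - X j) ⬝ᵥ (X i - X j)) := by
  have hnonneg : ∀ i j, 0 ≤ (X i - X j) ⬝ᵥ (X i - X j) := fun i j =>
    sum_nonneg fun k _ => mul_self_nonneg _
  refine (norm_le_sqrt_dotProduct_self _).trans (Real.sqrt_le_sqrt ?_)
  exact (single_le_sum (fun j _ => hnonneg i j) (mem_univ j)).trans
    (single_le_sum (f := fun i => ∑ j, (X i - X j) ⬝ᵥ (X i - X j))
      (fun i _ => sum_nonneg fun j _ => hnonneg i j) (mem_univ i))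

section Asymptotics

variable {f f' : ℝ → ℝ} {a : ℝ}

theorem antitoneOn_Ici_of_hasDerivAt_nonpos (hf : ∀ t, a ≤ t → HasDerivAt f (f' t) t)
    (hf' : ∀ t, a ≤ t → f' t ≤ 0) : AntitoneOn f (Set.Ici a) :=
  antitoneOn_of_hasDerivWithinAt_nonpos (convex_Ici a)
    (fun t ht => (hf t ht).continuousAt.continuousWithinAt)
    (fun t ht => (hf t (interior_subset ht)).hasDerivWithinAt)
    (fun t ht => hf' t (interior_subset ht))

theorem monotoneOn_Ici_of_hasDerivAt_nonneg (hf : ∀ t, a ≤ t → HasDerivAt f (f' t) t)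
    (hf' : ∀ t, a ≤ t → 0 ≤ f' t) : MonotoneOn f (Set.Ici a) :=
  monotoneOn_of_hasDerivWithinAt_nonneg (convex_Ici a)
    (fun t ht => (hf t ht).continuousAt.continuousWithinAt)
    (fun t ht => (hf t (interior_subset ht)).hasDerivWithinAt)
    (fun t ht => hf' t (interior_subset ht))

theorem MonotoneOn.exists_tendsto_atTop_of_le {B : ℝ} (hf : MonotoneOn f (Set.Ici a))
    (hB : ∀ t, a ≤ t → f t ≤ B) : ∃ l, Tendsto f atTop (𝓝 l) := by
  have hmono : Monotone fun t => f (max t a) := fun s t hst =>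
    hf (le_max_right s a) (le_max_right t a) (max_le_max hst le_rfl)
  refine ⟨_, (tendsto_atTop_ciSup hmono ⟨B, ?_⟩).congr' ?_⟩
  · rintro _ ⟨t, rfl⟩
    exact hB _ (le_max_right t a)
  · filter_upwards [eventually_ge_atTop a] with t ht
    rw [max_eq_left ht]

theorem AntitoneOn.exists_tendsto_atTop_of_ge {B : ℝ} (hf : AntitoneOn f (Set.Ici a))
    (hB : ∀ t, a ≤ t → B ≤ f t) : ∃ l, Tendsto f atTop (𝓝 l) := by
  obtain ⟨l, hl⟩ := hf.neg.exists_tendsto_atTop_of_le (B := -B) fun t ht => neg_le_neg (hB t ht)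
  exact ⟨-l, by simpa using hl.neg⟩

theorem exists_neg_of_hasDerivAt_le_neg {ε : ℝ} (hε : 0 < ε)
    (hf : ∀ t, a ≤ t → HasDerivAt f (f' t) t) (hf' : ∀ t, a ≤ t → f' t ≤ -ε) :
    ∃ t, a ≤ t ∧ f t < 0 := by
  have hanti : AntitoneOn (fun t => f t + ε * t) (Set.Ici a) :=
    antitoneOn_Ici_of_hasDerivAt_nonpos (f' := fun t => f' t + ε)
      (fun t ht => (hf t ht).add ((hasDerivAt_id t).const_mul ε) |>.congr_deriv (by simp))
      (fun t ht => by linarith [hf' t ht])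
  set t := a + (|f a| + 1) / ε
  have hat : a ≤ t := le_add_of_nonneg_right (by positivity)
  refine ⟨t, hat, ?_⟩
  have h := hanti Set.self_mem_Ici hat hat
  have ht : ε * (t - a) = |f a| + 1 := by simp only [t]; field_simp; ring
  simp only at h
  linarith [le_abs_self (f a)]

theorem nonpos_of_tendsto_of_hasDerivAt_le_neg {Q : ℝ → ℝ} {L : ℝ}
    (hf : ∀ t, a ≤ t → HasDerivAt f (f' t) t) (hf' : ∀ t, a ≤ t → f' t ≤ -Q t)
    (hf0 : ∀ t, a ≤ t → 0 ≤ f t) (hQ : Tendsto Q atTop (𝓝 L)) : L ≤ 0 := by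
  by_contra! hL
  obtain ⟨b, hb⟩ := eventually_atTop.1 (hQ.eventually (eventually_gt_nhds (half_lt_self hL)))
  obtain ⟨t, ht, hft⟩ := exists_neg_of_hasDerivAt_le_neg (a := max a b) (half_pos hL)
    (fun t ht => hf t ((le_max_left a b).trans ht))
    (fun t ht => (hf' t ((le_max_left a b).trans ht)).trans
      (neg_le_neg (hb t ((le_max_right a b).trans ht)).le))
  exact hft.not_ge (hf0 t ((le_max_left a b).trans ht))

end Asymptotics

theorem tendsto_zero_and_exists_tendsto_of_lyapunov {Q Q' c c' : ℝ → ℝ} {K κ c₀ : ℝ}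
    (hK : 0 < K) (hκ : 0 < κ) (hQ : ∀ t, 0 ≤ t → HasDerivAt Q (Q' t) t)
    (hc : ∀ t, 0 ≤ t → HasDerivAt c (c' t) t) (hQ0 : ∀ t, 0 ≤ Q t)
    (hc' : ∀ t, 0 ≤ t → 0 ≤ c' t)
    (hV' : ∀ t, 0 ≤ t → Q' t + K * (2 * (c t - c₀) * c' t) ≤ -(κ * Q t)) :
    Tendsto Q atTop (𝓝 0) ∧ ∃ l, Tendsto c atTop (𝓝 l) := by
  set V := fun t => Q t + K * (c t - c₀) ^ 2
  have hV : ∀ t, 0 ≤ t → HasDerivAt V (Q' t + K * (2 * (c t - c₀) * c' t)) t := fun t ht =>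
    (hQ t ht).add ((((hc t ht).sub_const c₀).pow 2).const_mul K |>.congr_deriv (by simp))
  have hV0 : ∀ t, 0 ≤ V t := fun t => add_nonneg (hQ0 t) (by positivity)
  have hVanti : AntitoneOn V (Set.Ici 0) := antitoneOn_Ici_of_hasDerivAt_nonpos hV fun t ht =>
    (hV' t ht).trans (neg_nonpos.2 (mul_nonneg hκ.le (hQ0 t)))
  have hcbdd : ∀ t, 0 ≤ t → c t ≤ c₀ + √(V 0 / K) := fun t ht => by
    have hsq : (c t - c₀) ^ 2 ≤ V 0 / K := by
      rw [le_div_iff₀ hK]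
      linarith [hVanti Set.self_mem_Ici ht ht, hQ0 t]
    linarith [Real.le_sqrt_of_sq_le hsq]
  obtain ⟨l, hl⟩ := (monotoneOn_Ici_of_hasDerivAt_nonneg hc hc').exists_tendsto_atTop_of_le hcbdd
  obtain ⟨v, hv⟩ := hVanti.exists_tendsto_atTop_of_ge fun t _ => hV0 t
  have hQlim : Tendsto Q atTop (𝓝 (v - K * (l - c₀) ^ 2)) :=
    (hv.sub (((hl.sub_const c₀).pow 2).const_mul K)).congr fun t => by simp [V]
  have hL : v - K * (l - c₀) ^ 2 ≤ 0 := by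
    refine nonpos_of_mul_nonpos_right ?_ hκ
    exact nonpos_of_tendsto_of_hasDerivAt_le_neg hV hV' (fun t _ => hV0 t) (hQlim.const_mul κ)
  exact ⟨le_antisymm hL (ge_of_tendsto' hQlim hQ0) ▸ hQlim, l, hl⟩

theorem tendsto_zero_and_exists_tendsto_of_adaptive_coupling {Q F T R c : ℝ → ℝ}
    {N α β ϖ M C : ℝ} (hN : 0 < N) (hα : 0 < α) (hβ : 0 < β) (hϖ : 0 < ϖ) (hM : 0 ≤ M)
    (hC : 0 < C) (hQ : ∀ t, 0 ≤ t → HasDerivAt Q (2 * (F t + 2 * N * c t * T t)) t)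
    (hc : ∀ t, 0 ≤ t → HasDerivAt c (-(α / 2) * T t) t) (hQ0 : ∀ t, 0 ≤ Q t)
    (hF : ∀ t, 0 ≤ t → F t ≤ (M - ϖ) * Q t) (hTR : ∀ t, T t ≤ -(β / 2) * R t)
    (hQR : ∀ t, Q t ≤ C * R t) :
    Tendsto Q atTop (𝓝 0) ∧ ∃ l, Tendsto c atTop (𝓝 l) := by
  have hR0 : ∀ t, 0 ≤ R t := fun t => nonneg_of_mul_nonneg_right ((hQ0 t).trans (hQR t)) hC
  refine tendsto_zero_and_exists_tendsto_of_lyapunov (K := 4 * N / α) (c₀ := C * M / (N * β))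
    (κ := 2 * ϖ) (by positivity) (by positivity) hQ hc hQ0 (fun t _ => ?_) fun t ht => ?_
  · exact mul_nonneg_of_nonpos_of_nonpos (by linarith)
      ((hTR t).trans (mul_nonpos_of_nonpos_of_nonneg (by linarith) (hR0 t)))
  · have hCM : C * M / β * T t ≤ C * M / β * (-(β / 2) * R t) := by gcongr; exact hTR t
    have hMQ : M * Q t ≤ M * (C * R t) := by gcongr; exact hQR t
    have e1 : 2 * (F t + 2 * N * c t * T t) +
        4 * N / α * (2 * (c t - C * M / (N * β)) * (-(α / 2) * T t)) =
        2 * F t + 4 * (C * M / β * T t) := by field_simp; ring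
    have e2 : C * M / β * (-(β / 2) * R t) = -(M * (C * R t)) / 2 := by field_simp
    rw [e1]
    linarith [hF t ht]

theorem stmt17_general (N n : ℕ) (hN : 2 ≤ N) (A : Matrix (Fin N) (Fin N) ℝ)
    (hsym : ∀ i j, A i j = A j i)
    (hoff : ∀ i j, i ≠ j → 0 ≤ A i j)
    (hdiag : ∀ i, A i i = -∑ j ∈ Finset.univ.erase i, A i j)
    (hirr : ∀ S : Finset (Fin N), S.Nonempty → S ≠ Finset.univ →
      ∃ i ∈ S, ∃ j, j ∉ S ∧ A i j ≠ 0)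
    (δ : Fin n → ℝ) (ϖ : ℝ) (hϖ : 0 < ϖ)
    (f : (Fin n → ℝ) → ℝ → (Fin n → ℝ))
    (hQUAD : ∀ x y : Fin n → ℝ, ∀ t : ℝ, 0 ≤ t →
      (∑ k, (x k - y k) * (f x t k - f y t k)) - (∑ k, δ k * (x k - y k) ^ 2)
        ≤ -ϖ * ∑ k, (x k - y k) ^ 2)
    (β : ℝ) (hβ : 0 < β) (g : Fin n → ℝ → ℝ)
    (hg : ∀ k : Fin n, ∀ u v : ℝ, u ≠ v → β ≤ (g k u - g k v) / (u - v))
    (α : ℝ) (hα : 0 < α)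
    (x : Fin N → ℝ → (Fin n → ℝ)) (c : ℝ → ℝ)
    (hODE : ∀ i, ∀ t : ℝ, 0 ≤ t →
      HasDerivAt (x i)
        (fun k => f (x i t) t k
          + c t * ∑ j ∈ Finset.univ.erase i, A i j * (g k (x j t k) - g k (x i t k))) t)
    (hcODE : ∀ t : ℝ, 0 ≤ t →
      HasDerivAt c (-(α / 2) * ∑ i, ∑ j, A i j * ∑ k, x i t k * g k (x j t k)) t) :
    (∀ i j, Tendsto (fun t => ‖x i t - x j t‖) atTop (nhds 0)) ∧
    ∃ c₀ : ℝ, Tendsto c atTop (nhds c₀) := by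
  have hrow : ∀ i, ∑ j, A i j = 0 := fun i => by
    rw [← add_sum_erase _ _ (mem_univ i), hdiag]
    ring
  obtain ⟨C, hC, hQR⟩ := exists_sum_sum_dotProduct_sub_le_mul hoff hirr (Fin n)
  obtain ⟨M, hM⟩ := Finite.exists_le δ
  set G : ℝ → Fin N → Fin n → ℝ := fun t j k => g k (x j t k)
  set Q := fun t => ∑ i, ∑ j, (x i t - x j t) ⬝ᵥ (x i t - x j t)
  set F := fun t => ∑ i, ∑ j, (x i t - x j t) ⬝ᵥ (f (x i t) t - f (x j t) t)
  have hx : ∀ i t, 0 ≤ t → HasDerivAt (x i) (f (x i t) t + c t • ∑ j, A i j • G t j) t :=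
    fun i t ht => by
      rw [← sum_erase_smul_sub_eq_sum_smul hrow]
      convert hODE i t ht using 1
      ext k
      simp [G, Finset.sum_apply]
  have hQ : ∀ t, 0 ≤ t → HasDerivAt Q
      (2 * (F t + 2 * N * c t * ∑ i, ∑ j, A i j * (x i t ⬝ᵥ G t j))) t := fun t ht => by
    simpa only [sum_sum_sub_dotProduct_sub_add_smul hsym hrow, Fintype.card_fin] using
      hasDerivAt_sum_sum_dotProduct_sub (hx · t ht)
  have hF : ∀ t, 0 ≤ t → F t ≤ (max M 0 - ϖ) * Q t := fun t ht => by
    simp only [F, Q, mul_sum]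
    exact sum_le_sum fun i _ => sum_le_sum fun j _ =>
      sub_dotProduct_sub_le_of_quad (hQUAD _ _ t ht) fun k => (hM k).trans (le_max_left M 0)
  -- `hcODE` fits as is: `∑ k, x i t k * g k (x j t k)` unfolds to `x i t ⬝ᵥ G t j`.
  obtain ⟨hQlim, hclim⟩ := tendsto_zero_and_exists_tendsto_of_adaptive_coupling
    (by exact_mod_cast (by omega : 0 < N)) hα hβ hϖ (le_max_right M 0) hC hQ hcODE
    (fun t => sum_nonneg fun i _ => sum_nonneg fun j _ => sum_nonneg fun k _ => mul_self_nonneg _)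
    hF (fun t => sum_sum_mul_dotProduct_le hsym hrow hoff hg _) fun t => hQR _
  refine ⟨fun i j => squeeze_zero (fun t => norm_nonneg _)
    (fun t => norm_sub_le_sqrt_sum_sum_dotProduct (x · t) i j) ?_, hclim⟩
  simpa only [Real.sqrt_zero] using hQlim.sqrt

/-- Theorem 4: nonlinearly coupled systems. A is an irreducible matrix
satisfying Condition A2, f ∈ QUAD(Δ,ϖ), and g acts componentwise via functions
g_k with slope (g_k(u) − g_k(v))/(u − v) ≥ β > 0 for u ≠ v. With the adaptive scheme
ẋᵢ = f(xᵢ,t) + c(t) Σ_{j≠i} a_{ij} (g(xⱼ) − g(xᵢ)),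
ċ = −(α/2) Σᵢⱼ a_{ij} xᵢᵀ g(xⱼ), c(0) = 0,
then ‖xᵢ(t) − xⱼ(t)‖ → 0 for all i,j and c(t) converges to a finite limit. -/
theorem stmt17 (N n : ℕ) (hN : 2 ≤ N) (A : Matrix (Fin N) (Fin N) ℝ)
    (hsym : ∀ i j, A i j = A j i)
    (hoff : ∀ i j, i ≠ j → 0 ≤ A i j)
    (hdiag : ∀ i, A i i = -∑ j ∈ Finset.univ.erase i, A i j)
    (hirr : ∀ S : Finset (Fin N), S.Nonempty → S ≠ Finset.univ →
      ∃ i ∈ S, ∃ j, j ∉ S ∧ A i j ≠ 0)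
    (δ : Fin n → ℝ) (ϖ : ℝ) (hϖ : 0 < ϖ)
    (f : (Fin n → ℝ) → ℝ → (Fin n → ℝ))
    (hf : Continuous fun p : (Fin n → ℝ) × ℝ => f p.1 p.2)
    (hQUAD : ∀ x y : Fin n → ℝ, ∀ t : ℝ, 0 ≤ t →
      (∑ k, (x k - y k) * (f x t k - f y t k)) - (∑ k, δ k * (x k - y k) ^ 2)
        ≤ -ϖ * ∑ k, (x k - y k) ^ 2)
    (β : ℝ) (hβ : 0 < β) (g : Fin n → ℝ → ℝ)
    (hg : ∀ k : Fin n, ∀ u v : ℝ, u ≠ v → β ≤ (g k u - g k v) / (u - v))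
    (α : ℝ) (hα : 0 < α)
    (x : Fin N → ℝ → (Fin n → ℝ)) (c : ℝ → ℝ) (hc0 : c 0 = 0)
    (hODE : ∀ i, ∀ t : ℝ, 0 ≤ t →
      HasDerivAt (x i)
        (fun k => f (x i t) t k
          + c t * ∑ j ∈ Finset.univ.erase i, A i j * (g k (x j t k) - g k (x i t k))) t)
    (hcODE : ∀ t : ℝ, 0 ≤ t →
      HasDerivAt c (-(α / 2) * ∑ i, ∑ j, A i j * ∑ k, x i t k * g k (x j t k)) t) :
    (∀ i j, Tendsto (fun t => ‖x i t - x j t‖) atTop (nhds 0)) ∧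
    ∃ c₀ : ℝ, Tendsto c atTop (nhds c₀) :=
  stmt17_general N n hN A hsym hoff hdiag hirr δ ϖ hϖ f hQUAD β hβ g hg α hα x c hODE hcODE
end

section
/- (Corollary 3) Let N ≥ 2 and let A(t) = (a_{ij}(t)), t ≥ 0, be a family of irreducible N×N matrices satisfying Condition A2 whose largest nonzero eigenvalue satisfies λ_2(t) ≤ λ < 0 for all t. Suppose f : ℝ^n × ℝ⁺ → ℝ^n is continuous and belongs to QUAD(Δ,ϖ) with ϖ > 0, and let g_1,…,g_n : ℝ → ℝ satisfy (g_k(u) − g_k(v))/(u − v) ≥ β for all u ≠ v and k = 1,…,n, where β > 0; write g(x) = (g_1(x^1),…,g_n(x^n))^T. Let α > 0 and let x_1,…,x_N : [0,∞) → ℝ^n and c : [0,∞) → ℝ be differentiable functions satisfying, for all t ≥ 0, ẋ_i(t) = f(x_i(t),t) + c(t) Σ_{j≠i} a_{ij}(t) (g(x_j(t)) − g(x_i(t))), ċ(t) = −(α/2) Σ_{i,j} a_{ij}(t) x_i(t)^T g(x_j(t)), and c(0) = 0. Then ‖x_i(t) − x_j(t)‖ → 0 as t → ∞ for all i, j, and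 c(t) converges to a finite limit. -/
/-!
Let `S = ∑ᵢⱼ ‖xᵢ - xⱼ‖²` and `P = ∑ᵢⱼ aᵢⱼ xᵢᵀ g(xⱼ)`, so that `ċ = -(α/2) P`. Because `A` is
symmetric with zero row sums, `P = -½ ∑ₖ ∑ᵢⱼ aᵢⱼ (xᵢᵏ - xⱼᵏ)(gₖ(xᵢᵏ) - gₖ(xⱼᵏ))`; the slope bound
on `g` and the spectral bound on the mean-zero part of `xᵏ` give `2N P ≤ βλ S ≤ 0`. Hence `c` is
nondecreasing, and `Ṡ = 2 ∑ᵢⱼ (xᵢ - xⱼ)ᵀ(f(xᵢ) - f(xⱼ)) + 4N c P ≤ 2D S + 4N c P`, where `D`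
bounds the one-sided Lipschitz constant of `f`. The function `S + (4N/α)(c - D/(β|λ|))²` is then
nonincreasing, so `c` is bounded and converges. Finally `Ṡ ≤ 2D S` keeps `S` from dropping much
within a unit of time, while `ċ ≥ (αβ|λ|/4N) S`; convergence of `c` forces `S → 0`.
-/

open Matrix Filter Topology

section ScalarODE

open Set

theorem Convex.monotoneOn_of_hasDerivAt_nonneg {s : Set ℝ} (hs : Convex ℝ s) {f f' : ℝ → ℝ}
    (hf : ∀ x ∈ s, HasDerivAt f (f' x) x) (hf' : ∀ x ∈ s, 0 ≤ f' x) : MonotoneOn f s :=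
  monotoneOn_of_hasDerivWithinAt_nonneg hs (fun x hx ↦ (hf x hx).continuousAt.continuousWithinAt)
    (fun x hx ↦ (hf x (interior_subset hx)).hasDerivWithinAt) fun x hx ↦ hf' x (interior_subset hx)

theorem Convex.antitoneOn_of_hasDerivAt_nonpos {s : Set ℝ} (hs : Convex ℝ s) {f f' : ℝ → ℝ}
    (hf : ∀ x ∈ s, HasDerivAt f (f' x) x) (hf' : ∀ x ∈ s, f' x ≤ 0) : AntitoneOn f s :=
  antitoneOn_of_hasDerivWithinAt_nonpos hs (fun x hx ↦ (hf x hx).continuousAt.continuousWithinAt)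
    (fun x hx ↦ (hf x (interior_subset hx)).hasDerivWithinAt) fun x hx ↦ hf' x (interior_subset hx)

theorem MonotoneOn.exists_tendsto_atTop_of_bddAbove {f : ℝ → ℝ} {a : ℝ}
    (hf : MonotoneOn f (Ici a)) (hbdd : BddAbove (f '' Ici a)) :
    ∃ l, Tendsto f atTop (𝓝 l) := by
  refine ⟨_, tendsto_comp_val_Ici_atTop.1 (tendsto_atTop_ciSup (f := fun t : Ici a ↦ f t)
    (fun s t hst ↦ hf s.2 t.2 hst) ?_)⟩
  rwa [← image_eq_range]

theorem le_mul_exp_of_hasDerivAt_le_mul {S S' : ℝ → ℝ} {L a b : ℝ}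
    (hS : ∀ t ∈ Icc a b, HasDerivAt S (S' t) t) (hS' : ∀ t ∈ Ico a b, S' t ≤ L * S t) :
    ∀ t ∈ Icc a b, S t ≤ S a * Real.exp (L * (t - a)) := by
  intro t ht
  simpa only [gronwallBound_ε0] using le_gronwallBound_of_liminf_deriv_right_le (K := L) (ε := 0)
    (fun t ht ↦ (hS t ht).continuousAt.continuousWithinAt)
    (fun t ht r hr ↦ (hS t (Ico_subset_Icc_self ht)).hasDerivWithinAt.liminf_right_slope_le hr)
    le_rfl (fun t ht ↦ by simpa using hS' t ht) t ht

theorem tendsto_zero_of_hasDerivAt_le_mul_of_mul_le_deriv {S S' c c' : ℝ → ℝ} {L γ c₀ a : ℝ}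
    (hL : 0 ≤ L) (hγ : 0 < γ) (hS0 : ∀ t ∈ Ici a, 0 ≤ S t)
    (hS : ∀ t ∈ Ici a, HasDerivAt S (S' t) t) (hS' : ∀ t ∈ Ici a, S' t ≤ L * S t)
    (hc : ∀ t ∈ Ici a, HasDerivAt c (c' t) t) (hc' : ∀ t ∈ Ici a, γ * S t ≤ c' t)
    (hlim : Tendsto c atTop (𝓝 c₀)) : Tendsto S atTop (𝓝 0) := by
  have hstep : ∀ t, a + 1 ≤ t → S t ≤ Real.exp L / γ * (c t - c (t - 1)) := by
    intro t ht
    have hIci : Icc (t - 1) t ⊆ Ici a := fun u hu ↦ by simp only [mem_Ici]; linarith [hu.1]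
    obtain ⟨u, hu, hcu⟩ := exists_hasDerivAt_eq_slope c c' (by linarith : t - 1 < t)
      (fun u hu ↦ (hc u (hIci hu)).continuousAt.continuousWithinAt)
      (fun u hu ↦ hc u (hIci (Ioo_subset_Icc_self hu)))
    have hgrow := le_mul_exp_of_hasDerivAt_le_mul (fun v hv ↦ hS v (hIci (Icc_subset_Icc_left
      hu.1.le hv))) (fun v hv ↦ hS' v (hIci (Icc_subset_Icc_left hu.1.le (Ico_subset_Icc_self hv))))
      t ⟨hu.2.le, le_rfl⟩
    have hexp : Real.exp (L * (t - u)) ≤ Real.exp L :=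
      Real.exp_le_exp.2 (mul_le_of_le_one_right hL (by linarith [hu.1]))
    have hSu : γ * S u ≤ c t - c (t - 1) := by
      have := hc' u (hIci (Ioo_subset_Icc_self hu))
      rwa [hcu, sub_sub_cancel, div_one] at this
    rw [div_mul_eq_mul_div, le_div_iff₀ hγ]
    calc S t * γ ≤ S u * Real.exp L * γ := by
          gcongr
          exact hgrow.trans (mul_le_mul_of_nonneg_left hexp (hS0 u (hIci (Ioo_subset_Icc_self hu))))
      _ ≤ Real.exp L * (c t - c (t - 1)) := by nlinarith [Real.exp_pos L]
  have hincr : Tendsto (fun t ↦ Real.exp L / γ * (c t - c (t - 1))) atTop (𝓝 0) := by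
    have hshift := hlim.comp (tendsto_atTop_add_const_right atTop (-1) tendsto_id)
    simpa [Function.comp_def, ← sub_eq_add_neg] using (hlim.sub hshift).const_mul (Real.exp L / γ)
  refine squeeze_zero' ?_ ?_ hincr
  · filter_upwards [eventually_ge_atTop a] with t ht using hS0 t ht
  · filter_upwards [eventually_ge_atTop (a + 1)] with t ht using hstep t ht

theorem bddAbove_image_Ici_of_adaptive_gain {S S' c P : ℝ → ℝ} {D κ μ r a : ℝ} (hD : 0 ≤ D)
    (hκ : 0 < κ) (hμ : 0 < μ) (hr : 0 < r) (hS0 : ∀ t ∈ Ici a, 0 ≤ S t)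
    (hS : ∀ t ∈ Ici a, HasDerivAt S (S' t) t)
    (hS' : ∀ t ∈ Ici a, S' t ≤ D * S t + κ * c t * P t)
    (hc : ∀ t ∈ Ici a, HasDerivAt c (-r * P t) t)
    (hP : ∀ t ∈ Ici a, κ * P t ≤ -μ * S t) : BddAbove (c '' Ici a) := by
  set M := D / μ
  set W := fun t ↦ S t + κ / (2 * r) * (c t - M) ^ 2
  have hW : AntitoneOn W (Ici a) := by
    refine (convex_Ici a).antitoneOn_of_hasDerivAt_nonpos
      (fun t ht ↦ (hS t ht).add ((((hc t ht).sub_const M).pow 2).const_mul _)) fun t ht ↦ ?_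
    have hMP : M * (κ * P t) ≤ M * (-μ * S t) :=
      mul_le_mul_of_nonneg_left (hP t ht) (div_nonneg hD hμ.le)
    have hMμ : M * (-μ * S t) = -D * S t := by rw [← div_mul_cancel₀ D hμ.ne']; ring
    have hcancel : κ / (2 * r) * (((2 : ℕ) : ℝ) * (c t - M) ^ (2 - 1) * (-r * P t))
        = -κ * (c t - M) * P t := by
      field_simp
      ring
    rw [hcancel]
    linarith [hS' t ht]
  refine ⟨M + Real.sqrt (2 * r / κ * W a), ?_⟩
  rintro _ ⟨t, ht, rfl⟩
  have hsq : (c t - M) ^ 2 ≤ 2 * r / κ * W a := by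
    have hWt : S t + κ / (2 * r) * (c t - M) ^ 2 ≤ W a := hW self_mem_Ici ht ht
    calc (c t - M) ^ 2 = 2 * r / κ * (κ / (2 * r) * (c t - M) ^ 2) := by field_simp
      _ ≤ 2 * r / κ * W a := by gcongr; linarith [hS0 t ht]
  linarith [le_abs_self (c t - M), Real.abs_le_sqrt hsq]

theorem tendsto_zero_and_exists_tendsto_of_adaptive_gain {S S' c P : ℝ → ℝ} {D κ μ r a : ℝ}
    (hD : 0 ≤ D) (hκ : 0 < κ) (hμ : 0 < μ) (hr : 0 < r) (hS0 : ∀ t ∈ Ici a, 0 ≤ S t)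
    (hS : ∀ t ∈ Ici a, HasDerivAt S (S' t) t)
    (hS' : ∀ t ∈ Ici a, S' t ≤ D * S t + κ * c t * P t)
    (hc : ∀ t ∈ Ici a, HasDerivAt c (-r * P t) t) (hca : 0 ≤ c a)
    (hP : ∀ t ∈ Ici a, κ * P t ≤ -μ * S t) :
    Tendsto S atTop (𝓝 0) ∧ ∃ c₀, Tendsto c atTop (𝓝 c₀) := by
  have hP0 : ∀ t ∈ Ici a, P t ≤ 0 := fun t ht ↦ by nlinarith [hP t ht, hS0 t ht]
  have hmono : MonotoneOn c (Ici a) :=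
    (convex_Ici a).monotoneOn_of_hasDerivAt_nonneg hc fun t ht ↦ by nlinarith [hP0 t ht]
  obtain ⟨c₀, hc₀⟩ := hmono.exists_tendsto_atTop_of_bddAbove
    (bddAbove_image_Ici_of_adaptive_gain hD hκ hμ hr hS0 hS hS' hc hP)
  refine ⟨tendsto_zero_of_hasDerivAt_le_mul_of_mul_le_deriv (γ := r * μ / κ) hD (by positivity)
    hS0 hS (fun t ht ↦ ?_) hc (fun t ht ↦ ?_) hc₀, c₀, hc₀⟩
  · have hct : 0 ≤ c t := hca.trans (hmono self_mem_Ici ht ht)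
    linarith [hS' t ht, mul_nonpos_of_nonneg_of_nonpos (mul_nonneg hκ.le hct) (hP0 t ht)]
  · rw [div_mul_eq_mul_div, div_le_iff₀ hκ]
    nlinarith [hP t ht]

end ScalarODE

open Finset

section LaplacianForm

variable {ι : Type*} [Fintype ι]

theorem sum_sum_sub_mul_sub (u v : ι → ℝ) :
    ∑ i, ∑ j, (u i - u j) * (v i - v j) =
      2 * Fintype.card ι * (u ⬝ᵥ v) - 2 * (∑ i, u i) * ∑ i, v i := by
  simp only [sub_mul, mul_sub, sum_sub_distrib, ← sum_mul, ← mul_sum, sum_const, card_univ,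
    mul_assoc, nsmul_eq_mul, dotProduct]
  ring

theorem sum_sum_sub_mul_mulVec_sub {a : Matrix ι ι ℝ} (hcol : ∀ j, ∑ i, a i j = 0)
    (y z : ι → ℝ) :
    ∑ i, ∑ j, (y i - y j) * ((a *ᵥ z) i - (a *ᵥ z) j) = 2 * Fintype.card ι * (y ⬝ᵥ a *ᵥ z) := by
  have hsum : ∑ i, (a *ᵥ z) i = 0 := by
    simp only [mulVec, dotProduct]
    rw [sum_comm]
    simp [← sum_mul, hcol]
  rw [sum_sum_sub_mul_sub, hsum]
  ring

namespace Matrix.IsSymm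

variable {a : Matrix ι ι ℝ}

theorem sum_apply_eq_zero (hsym : a.IsSymm) (hrow : ∀ i, ∑ j, a i j = 0) (j : ι) :
    ∑ i, a i j = 0 := by
  simpa only [hsym.apply] using hrow j

theorem sum_sum_mul_sub_mul_sub (hsym : a.IsSymm) (hrow : ∀ i, ∑ j, a i j = 0) (u v : ι → ℝ) :
    ∑ i, ∑ j, a i j * ((u i - u j) * (v i - v j)) = -2 * (u ⬝ᵥ a *ᵥ v) := by
  have hdiag₁ : ∑ i, ∑ j, a i j * (u i * v i) = 0 := by
    simp [← sum_mul, hrow]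
  have hdiag₂ : ∑ i, ∑ j, a i j * (u j * v j) = 0 := by
    rw [sum_comm]
    simp [← sum_mul, hsym.sum_apply_eq_zero hrow]
  have hcross : ∑ i, ∑ j, a i j * (u j * v i) = u ⬝ᵥ a *ᵥ v := by
    rw [sum_comm]
    simp only [dotProduct, mulVec, mul_sum, hsym.apply]
    exact sum_congr rfl fun i _ ↦ sum_congr rfl fun j _ ↦ by ring
  have hexpand : ∀ i j, a i j * ((u i - u j) * (v i - v j)) =
      a i j * (u i * v i) + a i j * (u j * v j) - a i j * (u j * v i) - a i j * (u i * v j) :=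
    fun i j ↦ by ring
  have hcross' : ∑ i, ∑ j, a i j * (u i * v j) = u ⬝ᵥ a *ᵥ v := by
    simp only [dotProduct, mulVec, mul_sum]
    exact sum_congr rfl fun i _ ↦ sum_congr rfl fun j _ ↦ by ring
  simp only [hexpand, sum_sub_distrib, sum_add_distrib, hdiag₁, hdiag₂, hcross, hcross']
  ring

theorem card_mul_dotProduct_mulVec_le (hsym : a.IsSymm) (hrow : ∀ i, ∑ j, a i j = 0)
    (hoff : ∀ i j, i ≠ j → 0 ≤ a i j) {lam β : ℝ}
    (hspec : ∀ v : ι → ℝ, ∑ i, v i = 0 → v ⬝ᵥ a *ᵥ v ≤ lam * ∑ i, v i ^ 2)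
    (hβ : 0 ≤ β) {y z : ι → ℝ}
    (hyz : ∀ i j, β * (y i - y j) ^ 2 ≤ (y i - y j) * (z i - z j)) :
    2 * Fintype.card ι * (y ⬝ᵥ a *ᵥ z) ≤ β * lam * ∑ i, ∑ j, (y i - y j) ^ 2 := by
  have hyz_le_yy : y ⬝ᵥ a *ᵥ z ≤ β * (y ⬝ᵥ a *ᵥ y) := by
    have hterm : ∀ i j, β * (a i j * ((y i - y j) * (y i - y j))) ≤
        a i j * ((y i - y j) * (z i - z j)) := fun i j ↦ by
      rcases eq_or_ne i j with rfl | hij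
      · simp
      · linarith [mul_le_mul_of_nonneg_left (hyz i j) (hoff i j hij)]
    have := sum_le_sum fun i (_ : i ∈ univ) ↦ sum_le_sum fun j (_ : j ∈ univ) ↦ hterm i j
    simp only [← mul_sum, hsym.sum_sum_mul_sub_mul_sub hrow] at this
    linarith
  set w : ι → ℝ := fun i ↦ y i - (∑ j, y j) / Fintype.card ι
  have hw : ∑ i, w i = 0 := by
    rcases isEmpty_or_nonempty ι with hι | hι
    · simp
    · simp only [w, sum_sub_distrib, sum_const, card_univ, nsmul_eq_mul]
      rw [mul_div_cancel₀ _ (Nat.cast_ne_zero.2 Fintype.card_ne_zero), sub_self]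
  have hdiff : ∀ i j, w i - w j = y i - y j := fun i j ↦ by simp only [w]; ring
  have hyy : y ⬝ᵥ a *ᵥ y = w ⬝ᵥ a *ᵥ w := by
    have h := hsym.sum_sum_mul_sub_mul_sub hrow w w
    simp only [hdiff, hsym.sum_sum_mul_sub_mul_sub hrow y y] at h
    linarith
  have hsq : ∑ i, ∑ j, (y i - y j) ^ 2 = 2 * Fintype.card ι * ∑ i, w i ^ 2 := by
    have h := sum_sum_sub_mul_sub w w
    simp only [hdiff, hw, dotProduct, ← sq] at h
    rw [h]
    ring
  calc 2 * Fintype.card ι * (y ⬝ᵥ a *ᵥ z)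
      ≤ 2 * Fintype.card ι * (β * (w ⬝ᵥ a *ᵥ w)) := by rw [← hyy]; gcongr
    _ ≤ 2 * Fintype.card ι * (β * (lam * ∑ i, w i ^ 2)) := by gcongr; exact hspec w hw
    _ = β * lam * ∑ i, ∑ j, (y i - y j) ^ 2 := by rw [hsq]; ring

end Matrix.IsSymm

end LaplacianForm

theorem mul_sq_le_mul_sub_of_le_slope {G : ℝ → ℝ} {β : ℝ}
    (hG : ∀ u v, u ≠ v → β ≤ (G u - G v) / (u - v)) (u v : ℝ) :
    β * (u - v) ^ 2 ≤ (u - v) * (G u - G v) := by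
  rcases eq_or_ne u v with rfl | huv
  · simp
  · have hpos : 0 < (u - v) ^ 2 := by positivity
    calc β * (u - v) ^ 2 ≤ (G u - G v) / (u - v) * (u - v) ^ 2 := by gcongr; exact hG u v huv
      _ = (u - v) * (G u - G v) := by field_simp [sub_ne_zero.2 huv]

theorem sum_mul_sq_le_sum_abs_mul_sum_sq {κ : Type*} [Fintype κ] (w d : κ → ℝ) :
    ∑ k, w k * d k ^ 2 ≤ (∑ k, |w k|) * ∑ k, d k ^ 2 := by
  rw [sum_mul]
  refine sum_le_sum fun k _ ↦ ?_
  calc w k * d k ^ 2 ≤ |w k| * d k ^ 2 := by gcongr; exact le_abs_self _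
    _ ≤ |w k| * ∑ l, d l ^ 2 := by
        gcongr; exact single_le_sum (fun l _ ↦ sq_nonneg (d l)) (mem_univ k)

theorem sum_sub_mul_sub_le_of_quad {κ : Type*} [Fintype κ] {F : (κ → ℝ) → κ → ℝ}
    {δ : κ → ℝ} {ϖ : ℝ}
    (hF : ∀ x y : κ → ℝ, (∑ k, (x k - y k) * (F x k - F y k)) - (∑ k, δ k * (x k - y k) ^ 2)
      ≤ -ϖ * ∑ k, (x k - y k) ^ 2) (x y : κ → ℝ) :
    ∑ k, (x k - y k) * (F x k - F y k) ≤ (∑ k, |δ k - ϖ|) * ∑ k, (x k - y k) ^ 2 := by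
  have hw := sum_mul_sq_le_sum_abs_mul_sum_sq (fun k ↦ δ k - ϖ) (fun k ↦ x k - y k)
  simp only [sub_mul, sum_sub_distrib, ← mul_sum] at hw
  linarith [hF x y]

theorem sum_erase_mul_sub_eq_mulVec {ι : Type*} [Fintype ι] [DecidableEq ι] {a : Matrix ι ι ℝ}
    (hrow : ∀ i, ∑ j, a i j = 0) (z : ι → ℝ) (i : ι) :
    ∑ j ∈ univ.erase i, a i j * (z j - z i) = (a *ᵥ z) i := by
  rw [sum_erase _ (by simp), mulVec, dotProduct]
  simp [mul_sub, sum_sub_distrib, ← sum_mul, hrow]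

section CoupledSystem

variable {ι κ : Type*} [Fintype ι] [Fintype κ]

def pairwiseSqDist (p : ι → κ → ℝ) : ℝ := ∑ i, ∑ j, ∑ k, (p i k - p j k) ^ 2

theorem pairwiseSqDist_nonneg (p : ι → κ → ℝ) : 0 ≤ pairwiseSqDist p := by
  unfold pairwiseSqDist
  positivity

theorem abs_sub_le_sqrt_pairwiseSqDist (p : ι → κ → ℝ) (i j : ι) (k : κ) :
    |p i k - p j k| ≤ √(pairwiseSqDist p) := by
  refine Real.abs_le_sqrt ?_
  calc (p i k - p j k) ^ 2 ≤ ∑ k, (p i k - p j k) ^ 2 :=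
        single_le_sum (f := fun k ↦ (p i k - p j k) ^ 2) (fun _ _ ↦ sq_nonneg _) (mem_univ k)
    _ ≤ ∑ j, ∑ k, (p i k - p j k) ^ 2 :=
        single_le_sum (f := fun j ↦ ∑ k, (p i k - p j k) ^ 2) (fun _ _ ↦ by positivity)
          (mem_univ j)
    _ ≤ pairwiseSqDist p :=
        single_le_sum (f := fun i ↦ ∑ j, ∑ k, (p i k - p j k) ^ 2) (fun _ _ ↦ by positivity)
          (mem_univ i)

theorem tendsto_norm_sub_of_tendsto_pairwiseSqDist {x : ι → ℝ → κ → ℝ} {l : Filter ℝ}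
    (h : Tendsto (fun t ↦ pairwiseSqDist fun i ↦ x i t) l (𝓝 0)) (i j : ι) :
    Tendsto (fun t ↦ ‖x i t - x j t‖) l (𝓝 0) := by
  refine squeeze_zero (fun t ↦ norm_nonneg _) (fun t ↦ ?_) (by simpa using h.sqrt)
  exact (pi_norm_le_iff_of_nonneg (Real.sqrt_nonneg _)).2 fun k ↦
    abs_sub_le_sqrt_pairwiseSqDist (fun i ↦ x i t) i j k

theorem hasDerivAt_pairwiseSqDist {x : ι → ℝ → κ → ℝ} {v : ι → κ → ℝ} {t : ℝ}
    (hx : ∀ i, HasDerivAt (x i) (v i) t) :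
    HasDerivAt (fun s ↦ pairwiseSqDist fun i ↦ x i s)
      (2 * ∑ i, ∑ j, ∑ k, (x i t k - x j t k) * (v i k - v j k)) t := by
  have hcoord : ∀ i k, HasDerivAt (fun s ↦ x i s k) (v i k) t :=
    fun i k ↦ hasDerivAt_pi.1 (hx i) k
  simp only [pairwiseSqDist, mul_sum]
  refine HasDerivAt.fun_sum fun i _ ↦ HasDerivAt.fun_sum fun j _ ↦ HasDerivAt.fun_sum fun k _ ↦ ?_
  exact (((hcoord i k).fun_sub (hcoord j k)).fun_pow 2).congr_deriv (by push_cast; ring)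

def couplingForm (a : Matrix ι ι ℝ) (g : κ → ℝ → ℝ) (p : ι → κ → ℝ) : ℝ :=
  ∑ i, ∑ j, a i j * ∑ k, p i k * g k (p j k)

theorem couplingForm_eq_sum_dotProduct_mulVec (a : Matrix ι ι ℝ) (g : κ → ℝ → ℝ)
    (p : ι → κ → ℝ) :
    couplingForm a g p = ∑ k, (fun i ↦ p i k) ⬝ᵥ a *ᵥ fun j ↦ g k (p j k) := by
  simp only [couplingForm, dotProduct, mulVec, mul_sum]
  conv_rhs => rw [sum_comm]
  refine sum_congr rfl fun i _ ↦ ?_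
  rw [sum_comm]
  exact sum_congr rfl fun k _ ↦ sum_congr rfl fun j _ ↦ by ring

theorem sum_sub_mul_sub_le_mul_pairwiseSqDist {F : (κ → ℝ) → κ → ℝ} {D : ℝ}
    (hF : ∀ x y : κ → ℝ, ∑ k, (x k - y k) * (F x k - F y k) ≤ D * ∑ k, (x k - y k) ^ 2)
    (p : ι → κ → ℝ) :
    ∑ i, ∑ j, ∑ k, (p i k - p j k) * (F (p i) k - F (p j) k) ≤ D * pairwiseSqDist p := by
  rw [pairwiseSqDist, mul_sum]
  refine sum_le_sum fun i _ ↦ ?_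
  rw [mul_sum]
  exact sum_le_sum fun j _ ↦ hF (p i) (p j)

theorem card_mul_couplingForm_le {a : Matrix ι ι ℝ} (hsym : a.IsSymm)
    (hrow : ∀ i, ∑ j, a i j = 0) (hoff : ∀ i j, i ≠ j → 0 ≤ a i j) {lam β : ℝ}
    (hspec : ∀ v : ι → ℝ, ∑ i, v i = 0 → v ⬝ᵥ a *ᵥ v ≤ lam * ∑ i, v i ^ 2) (hβ : 0 ≤ β)
    {g : κ → ℝ → ℝ} (hg : ∀ k u v, u ≠ v → β ≤ (g k u - g k v) / (u - v)) (p : ι → κ → ℝ) :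
    2 * Fintype.card ι * couplingForm a g p ≤ β * lam * pairwiseSqDist p := by
  rw [couplingForm_eq_sum_dotProduct_mulVec, pairwiseSqDist, sum_comm_cycle, mul_sum, mul_sum]
  exact sum_le_sum fun k _ ↦ hsym.card_mul_dotProduct_mulVec_le hrow hoff hspec hβ
    fun i j ↦ mul_sq_le_mul_sub_of_le_slope (hg k) (p i k) (p j k)

theorem sum_sub_mul_sub_drift_add_coupling {a : Matrix ι ι ℝ} (hcol : ∀ j, ∑ i, a i j = 0)
    (g : κ → ℝ → ℝ) (F : ι → κ → ℝ) (c : ℝ) (p : ι → κ → ℝ) :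
    ∑ i, ∑ j, ∑ k, (p i k - p j k) *
        (F i k + c * (a *ᵥ fun l ↦ g k (p l k)) i - (F j k + c * (a *ᵥ fun l ↦ g k (p l k)) j)) =
      ∑ i, ∑ j, ∑ k, (p i k - p j k) * (F i k - F j k) +
        2 * Fintype.card ι * c * couplingForm a g p := by
  have hsplit : ∀ i j k, (p i k - p j k) *
      (F i k + c * (a *ᵥ fun l ↦ g k (p l k)) i - (F j k + c * (a *ᵥ fun l ↦ g k (p l k)) j)) =
      (p i k - p j k) * (F i k - F j k) +
        c * ((p i k - p j k) * ((a *ᵥ fun l ↦ g k (p l k)) i - (a *ᵥ fun l ↦ g k (p l k)) j)) :=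
    fun i j k ↦ by ring
  have hcoupling : ∑ i, ∑ j, ∑ k, (p i k - p j k) *
      ((a *ᵥ fun l ↦ g k (p l k)) i - (a *ᵥ fun l ↦ g k (p l k)) j) =
      2 * Fintype.card ι * couplingForm a g p := by
    rw [sum_comm_cycle, couplingForm_eq_sum_dotProduct_mulVec, mul_sum]
    exact sum_congr rfl fun k _ ↦ sum_sum_sub_mul_mulVec_sub hcol _ _
  simp only [hsplit, sum_add_distrib, ← mul_sum, hcoupling]
  ring

end CoupledSystem

theorem stmt18_general (N n : ℕ) (hN : 2 ≤ N) (A : ℝ → Matrix (Fin N) (Fin N) ℝ)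
    (hsym : ∀ t : ℝ, 0 ≤ t → ∀ i j, A t i j = A t j i)
    (hoff : ∀ t : ℝ, 0 ≤ t → ∀ i j, i ≠ j → 0 ≤ A t i j)
    (hdiag : ∀ t : ℝ, 0 ≤ t → ∀ i, A t i i = -∑ j ∈ Finset.univ.erase i, A t i j)
    (lam : ℝ) (hlam : lam < 0)
    (hspec : ∀ t : ℝ, 0 ≤ t → ∀ v : Fin N → ℝ, (∑ i, v i) = 0 →
      v ⬝ᵥ (A t).mulVec v ≤ lam * ∑ i, (v i) ^ 2)
    (δ : Fin n → ℝ) (ϖ : ℝ)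
    (f : (Fin n → ℝ) → ℝ → (Fin n → ℝ))
    (hQUAD : ∀ x y : Fin n → ℝ, ∀ t : ℝ, 0 ≤ t →
      (∑ k, (x k - y k) * (f x t k - f y t k)) - (∑ k, δ k * (x k - y k) ^ 2)
        ≤ -ϖ * ∑ k, (x k - y k) ^ 2)
    (β : ℝ) (hβ : 0 < β) (g : Fin n → ℝ → ℝ)
    (hg : ∀ k : Fin n, ∀ u v : ℝ, u ≠ v → β ≤ (g k u - g k v) / (u - v))
    (α : ℝ) (hα : 0 < α)
    (x : Fin N → ℝ → (Fin n → ℝ)) (c : ℝ → ℝ) (hc0 : c 0 = 0)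
    (hODE : ∀ i, ∀ t : ℝ, 0 ≤ t →
      HasDerivAt (x i)
        (fun k => f (x i t) t k
          + c t * ∑ j ∈ Finset.univ.erase i,
              A t i j * (g k (x j t k) - g k (x i t k))) t)
    (hcODE : ∀ t : ℝ, 0 ≤ t →
      HasDerivAt c (-(α / 2) * ∑ i, ∑ j, A t i j * ∑ k, x i t k * g k (x j t k)) t) :
    (∀ i j, Tendsto (fun t => ‖x i t - x j t‖) atTop (nhds 0)) ∧
    ∃ c₀ : ℝ, Tendsto c atTop (nhds c₀) := by
  have hsymm : ∀ t, 0 ≤ t → (A t).IsSymm := fun t ht ↦ IsSymm.ext fun i j ↦ hsym t ht j i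
  have hrow : ∀ t, 0 ≤ t → ∀ i, ∑ j, A t i j = 0 := fun t ht i ↦ by
    rw [← add_sum_erase _ _ (mem_univ i), hdiag t ht i, neg_add_cancel]
  have hx : ∀ t, 0 ≤ t → ∀ i, HasDerivAt (x i)
      (fun k ↦ f (x i t) t k + c t * (A t *ᵥ fun j ↦ g k (x j t k)) i) t := fun t ht i ↦ by
    simpa only [sum_erase_mul_sub_eq_mulVec (hrow t ht)] using hODE i t ht
  obtain ⟨hS, c₀, hc⟩ := tendsto_zero_and_exists_tendsto_of_adaptive_gain (a := 0)
    (S := fun t ↦ pairwiseSqDist fun i ↦ x i t) (P := fun t ↦ couplingForm (A t) g fun i ↦ x i t)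
    (D := 2 * ∑ k, |δ k - ϖ|) (κ := 4 * N) (μ := 2 * β * -lam) (r := α / 2)
    (by positivity) (by norm_cast; omega) (by nlinarith) (by positivity)
    (fun t _ ↦ pairwiseSqDist_nonneg _) (fun t ht ↦ hasDerivAt_pairwiseSqDist (hx t ht))
    (fun t ht ↦ by
      rw [sum_sub_mul_sub_drift_add_coupling ((hsymm t ht).sum_apply_eq_zero (hrow t ht))]
      have := sum_sub_mul_sub_le_mul_pairwiseSqDist
        (sum_sub_mul_sub_le_of_quad fun y z ↦ hQUAD y z t ht) fun i ↦ x i t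
      simp only [Fintype.card_fin]
      linarith)
    hcODE hc0.ge
    (fun t ht ↦ by
      have := card_mul_couplingForm_le (hsymm t ht) (hrow t ht) (hoff t ht) (hspec t ht) hβ.le hg
        fun i ↦ x i t
      simp only [Fintype.card_fin] at this
      linarith)
  exact ⟨tendsto_norm_sub_of_tendsto_pairwiseSqDist hS, c₀, hc⟩

/-- Corollary 3: nonlinearly coupled systems with a time-varying family
A(t), t ≥ 0, of irreducible matrices satisfying Condition A2 whose largest nonzero
eigenvalue satisfies λ₂(t) ≤ λ < 0 (expressed variationally on the orthogonal
complement of the all-ones vector). f ∈ QUAD(Δ,ϖ), g acts componentwise with slopes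
(g_k(u) − g_k(v))/(u − v) ≥ β > 0. With the adaptive scheme
ẋᵢ = f(xᵢ,t) + c(t) Σ_{j≠i} a_{ij}(t) (g(xⱼ) − g(xᵢ)),
ċ = −(α/2) Σᵢⱼ a_{ij}(t) xᵢᵀ g(xⱼ), c(0) = 0,
then ‖xᵢ(t) − xⱼ(t)‖ → 0 for all i,j and c(t) converges to a finite limit. -/
theorem stmt18 (N n : ℕ) (hN : 2 ≤ N) (A : ℝ → Matrix (Fin N) (Fin N) ℝ)
    (hsym : ∀ t : ℝ, 0 ≤ t → ∀ i j, A t i j = A t j i)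
    (hoff : ∀ t : ℝ, 0 ≤ t → ∀ i j, i ≠ j → 0 ≤ A t i j)
    (hdiag : ∀ t : ℝ, 0 ≤ t → ∀ i, A t i i = -∑ j ∈ Finset.univ.erase i, A t i j)
    (hirr : ∀ t : ℝ, 0 ≤ t → ∀ S : Finset (Fin N), S.Nonempty → S ≠ Finset.univ →
      ∃ i ∈ S, ∃ j, j ∉ S ∧ A t i j ≠ 0)
    (lam : ℝ) (hlam : lam < 0)
    (hspec : ∀ t : ℝ, 0 ≤ t → ∀ v : Fin N → ℝ, (∑ i, v i) = 0 →
      v ⬝ᵥ (A t).mulVec v ≤ lam * ∑ i, (v i) ^ 2)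
    (δ : Fin n → ℝ) (ϖ : ℝ) (hϖ : 0 < ϖ)
    (f : (Fin n → ℝ) → ℝ → (Fin n → ℝ))
    (hf : Continuous fun p : (Fin n → ℝ) × ℝ => f p.1 p.2)
    (hQUAD : ∀ x y : Fin n → ℝ, ∀ t : ℝ, 0 ≤ t →
      (∑ k, (x k - y k) * (f x t k - f y t k)) - (∑ k, δ k * (x k - y k) ^ 2)
        ≤ -ϖ * ∑ k, (x k - y k) ^ 2)
    (β : ℝ) (hβ : 0 < β) (g : Fin n → ℝ → ℝ)
    (hg : ∀ k : Fin n, ∀ u v : ℝ, u ≠ v → β ≤ (g k u - g k v) / (u - v))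
    (α : ℝ) (hα : 0 < α)
    (x : Fin N → ℝ → (Fin n → ℝ)) (c : ℝ → ℝ) (hc0 : c 0 = 0)
    (hODE : ∀ i, ∀ t : ℝ, 0 ≤ t →
      HasDerivAt (x i)
        (fun k => f (x i t) t k
          + c t * ∑ j ∈ Finset.univ.erase i,
              A t i j * (g k (x j t k) - g k (x i t k))) t)
    (hcODE : ∀ t : ℝ, 0 ≤ t →
      HasDerivAt c (-(α / 2) * ∑ i, ∑ j, A t i j * ∑ k, x i t k * g k (x j t k)) t) :
    (∀ i j, Tendsto (fun t => ‖x i t - x j t‖) atTop (nhds 0)) ∧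
    ∃ c₀ : ℝ, Tendsto c atTop (nhds c₀) :=
  stmt18_general N n hN A hsym hoff hdiag lam hlam hspec δ ϖ f hQUAD β hβ g hg α hα x c hc0 hODE
    hcODE
end

section
/- Let p_1, p_2, p_3 > 0 and for t ∈ ℝ define the 3×3 matrix A(t) = diag(p_1,p_2,p_3) · B(t), where B(t) has rows (−5−sin t−cos t, 3+sin t, 2+cos t), (2+cos t, −5−sin t−cos t, 3+sin t), (3+sin t, 2+cos t, −5−sin t−cos t). Let ξ = (1/(3p_1), 1/(3p_2), 1/(3p_3))^T and Ξ = diag(ξ). Then: (i) for every t, ξ^T A(t) = 0, so ξ is a common left eigenvector of A(t) corresponding to eigenvalue 0; (ii) for every t, Ξ A(t) + A(t)^T Ξ = ((5 + sin t + cos t)/3) · M, where M is the matrix with rows (−2,1,1), (1,−2,1), (1,1,−2); and (iii) for every t and every x ∈ ℝ³ with x_1 + x_2 + x_3 = 0, x^T (Ξ A(t) + A(t)^T Ξ) x ≤ −(5 − √2) ‖x‖², i.e. the largest nonzero eigenvalue of Ξ A(t) + A(t)^T Ξ equals −(5 + sin t + cos t) ≤ −(5 − √2) < 0. -/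
open Matrix

/-- The time-varying matrix B(t) from the numerical example. -/
noncomputable def Bmat (t : ℝ) : Matrix (Fin 3) (Fin 3) ℝ :=
  !![-5 - Real.sin t - Real.cos t, 3 + Real.sin t, 2 + Real.cos t;
     2 + Real.cos t, -5 - Real.sin t - Real.cos t, 3 + Real.sin t;
     3 + Real.sin t, 2 + Real.cos t, -5 - Real.sin t - Real.cos t]

/-- For p₁, p₂, p₃ > 0 and A(t) = diag(p₁,p₂,p₃)·B(t),
the vector ξ = (1/(3p₁), 1/(3p₂), 1/(3p₃))ᵀ satisfies ξᵀA(t) = 0 for all t;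
ΞA(t) + A(t)ᵀΞ = ((5 + sin t + cos t)/3)·M with M = [[−2,1,1],[1,−2,1],[1,1,−2]];
and for every x ∈ ℝ³ with x₁ + x₂ + x₃ = 0,
xᵀ(ΞA(t) + A(t)ᵀΞ)x = −(5 + sin t + cos t)‖x‖² ≤ −(5 − √2)‖x‖², with
−(5 + sin t + cos t) ≤ −(5 − √2) < 0 (the largest nonzero eigenvalue). -/
theorem stmt19 (p₁ p₂ p₃ : ℝ) (hp₁ : 0 < p₁) (hp₂ : 0 < p₂) (hp₃ : 0 < p₃) :
    let A : ℝ → Matrix (Fin 3) (Fin 3) ℝ :=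
      fun t => Matrix.diagonal ![p₁, p₂, p₃] * Bmat t
    let ξ : Fin 3 → ℝ := ![1 / (3 * p₁), 1 / (3 * p₂), 1 / (3 * p₃)]
    let Ξ : Matrix (Fin 3) (Fin 3) ℝ := Matrix.diagonal ξ
    (∀ t : ℝ, Matrix.vecMul ξ (A t) = 0) ∧
    (∀ t : ℝ, Ξ * A t + (A t)ᵀ * Ξ
        = ((5 + Real.sin t + Real.cos t) / 3) • !![(-2 : ℝ), 1, 1; 1, -2, 1; 1, 1, -2]) ∧
    (∀ t : ℝ, ∀ x : Fin 3 → ℝ, x 0 + x 1 + x 2 = 0 →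
      x ⬝ᵥ (Ξ * A t + (A t)ᵀ * Ξ).mulVec x
        = -(5 + Real.sin t + Real.cos t) * ∑ i, (x i) ^ 2) ∧
    (∀ t : ℝ, -(5 + Real.sin t + Real.cos t) ≤ -(5 - Real.sqrt 2) ∧
      -(5 - Real.sqrt 2) < 0) ∧
    (∀ t : ℝ, ∀ x : Fin 3 → ℝ, x 0 + x 1 + x 2 = 0 →
      x ⬝ᵥ (Ξ * A t + (A t)ᵀ * Ξ).mulVec x
        ≤ -(5 - Real.sqrt 2) * ∑ i, (x i) ^ 2) := by
  intro A ξ Ξ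
  have hp₁' := hp₁.ne'
  have hp₂' := hp₂.ne'
  have hp₃' := hp₃.ne'
  have hM : ∀ t : ℝ, Ξ * A t + (A t)ᵀ * Ξ
      = ((5 + Real.sin t + Real.cos t) / 3) • !![(-2 : ℝ), 1, 1; 1, -2, 1; 1, 1, -2] := by
    intro t
    ext i j
    fin_cases i <;> fin_cases j <;>
      simp [A, Ξ, ξ, Bmat, Matrix.mul_apply, Fin.sum_univ_three, Matrix.diagonal,
        Matrix.transpose_apply, Matrix.vecHead, Matrix.vecTail] <;>
      field_simp <;> ring
  have hsc : ∀ t : ℝ, |Real.sin t + Real.cos t| ≤ Real.sqrt 2 := by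
    intro t
    have h3 : (Real.sin t + Real.cos t) ^ 2 ≤ 2 := by
      nlinarith [Real.sin_sq_add_cos_sq t, sq_nonneg (Real.sin t - Real.cos t)]
    calc |Real.sin t + Real.cos t| = Real.sqrt ((Real.sin t + Real.cos t) ^ 2) :=
        (Real.sqrt_sq_eq_abs _).symm
      _ ≤ Real.sqrt 2 := Real.sqrt_le_sqrt h3
  have hs5 : Real.sqrt 2 < 5 := by
    nlinarith [Real.sqrt_nonneg 2, Real.sq_sqrt (show (0:ℝ) ≤ 2 by norm_num)]
  have hquad : ∀ t : ℝ, ∀ x : Fin 3 → ℝ, x 0 + x 1 + x 2 = 0 →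
      x ⬝ᵥ (Ξ * A t + (A t)ᵀ * Ξ).mulVec x
        = -(5 + Real.sin t + Real.cos t) * ∑ i, (x i) ^ 2 := by
    intro t x hx
    have hx2 : x 2 = -(x 0) - x 1 := by linarith
    rw [hM t]
    simp [Matrix.mulVec, dotProduct, Fin.sum_univ_three, hx2,
      Matrix.vecHead, Matrix.vecTail]
    ring
  refine ⟨?_, hM, hquad, ?_, ?_⟩
  · intro t
    funext j
    fin_cases j <;>
      simp [A, ξ, Bmat, Matrix.vecMul, dotProduct, Matrix.mul_apply,
        Fin.sum_univ_three, Matrix.diagonal, Matrix.vecHead, Matrix.vecTail] <;> field_simp <;> ring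
  · intro t
    have h1 := (Real.sin_le_one t)
    constructor
    · linarith [neg_abs_le (Real.sin t + Real.cos t), hsc t]
    · linarith
  · intro t x hx
    rw [hquad t x hx]
    have hs : (0:ℝ) ≤ ∑ i, (x i) ^ 2 := Finset.sum_nonneg fun i _ => sq_nonneg _
    have h1 := hsc t
    have h2 := neg_abs_le (Real.sin t + Real.cos t)
    nlinarith [hs]
end
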